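/- arXiv:2603.08462 — 2 statements merged into one kernel-verified Lean document; each statement's English description precedes it below -/
import Mathlib

section
/- Let X, Y, Z be nonempty finite types, let P be a joint probability mass function on X × Y × Z, and suppose the answer is deterministic given the prompt: there is a function y_true : X → Y such that for every x with P(x) > 0, P(y_true(x) | x) = 1. Let Q be a conditional probability mass function on Y given X × Z with Q(y_true(x)|x,z) > 0 whenever P(x,z) > 0. Then the variational lower-bound expression simplifies to Σ_{x,y,z} P(x,y,z) · log( Q(y|x,z) / P(y|x) ) = Σ_{x,z} P(x,z) · log Q(y_true(x) | x, z), and this quantity is ≤ I(Y;Z|X). -/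
/-- If the answer is deterministic given the prompt (`P(y_true x | x) = 1` whenever
`P(x) > 0`) then the variational lower-bound expression simplifies:
`Σ_{x,y,z} P(x,y,z) log(Q(y|x,z)/P(y|x)) = Σ_{x,z} P(x,z) log Q(y_true x | x,z)`,
and this quantity is `≤ I(Y;Z|X)`. -/
theorem deterministic_answer_variational_bound
    {X Y Z : Type*} [Fintype X] [Fintype Y] [Fintype Z]
    [Nonempty X] [Nonempty Y] [Nonempty Z]
    (P : X → Y → Z → ℝ)
    (hnn : ∀ x y z, 0 ≤ P x y z)
    (hsum : ∑ x : X, ∑ y : Y, ∑ z : Z, P x y z = 1)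
    (ytrue : X → Y)
    (hdet : ∀ x, 0 < (∑ y : Y, ∑ z : Z, P x y z) →
      (∑ z : Z, P x (ytrue x) z) / (∑ y : Y, ∑ z : Z, P x y z) = 1)
    (Q : X → Z → Y → ℝ)
    (hQnn : ∀ x z y, 0 ≤ Q x z y)
    (hQsum : ∀ x z, ∑ y : Y, Q x z y = 1)
    (hQpos : ∀ x z, 0 < (∑ y : Y, P x y z) → 0 < Q x z (ytrue x)) :
    let Px : X → ℝ := fun x => ∑ y : Y, ∑ z : Z, P x y z
    let Pxz : X → Z → ℝ := fun x z => ∑ y : Y, P x y z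
    let PyGx : X → Y → ℝ := fun x y => (∑ z : Z, P x y z) / Px x
    let PyGxz : X → Y → Z → ℝ := fun x y z => P x y z / Pxz x z
    let I : ℝ := ∑ x : X, ∑ y : Y, ∑ z : Z,
      P x y z * Real.log (PyGxz x y z / PyGx x y)
    ((∑ x : X, ∑ y : Y, ∑ z : Z,
        P x y z * Real.log (Q x z y / PyGx x y)) =
      ∑ x : X, ∑ z : Z, Pxz x z * Real.log (Q x z (ytrue x))) ∧
    (∑ x : X, ∑ z : Z, Pxz x z * Real.log (Q x z (ytrue x))) ≤ I := by
  classical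
  intro Px Pxz PyGx PyGxz I
  have hkey : ∀ x y z, y ≠ ytrue x → P x y z = 0 := by
    intro x y z hy
    have hzsum : ∑ z : Z, P x y z = 0 := by
      by_cases hx : 0 < ∑ y : Y, ∑ z : Z, P x y z
      · have h1 := hdet x hx
        have h2 : ∑ z : Z, P x (ytrue x) z = ∑ y : Y, ∑ z : Z, P x y z := by
          field_simp at h1; linarith
        have h4 := Finset.sum_erase_add Finset.univ
          (fun y' => ∑ z : Z, P x y' z) (Finset.mem_univ (ytrue x))
        have h3 : ∑ y' ∈ Finset.univ.erase (ytrue x), ∑ z : Z, P x y' z = 0 := by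
          linarith
        exact (Finset.sum_eq_zero_iff_of_nonneg
          (fun i _ => Finset.sum_nonneg fun j _ => hnn x i j)).mp h3 y
          (Finset.mem_erase.mpr ⟨hy, Finset.mem_univ y⟩)
      · push_neg at hx
        have h0 : ∑ y : Y, ∑ z : Z, P x y z = 0 :=
          le_antisymm hx (Finset.sum_nonneg fun i _ => Finset.sum_nonneg fun j _ => hnn x i j)
        exact (Finset.sum_eq_zero_iff_of_nonneg
          (fun i _ => Finset.sum_nonneg fun j _ => hnn x i j)).mp h0 y (Finset.mem_univ y)
    exact (Finset.sum_eq_zero_iff_of_nonneg (fun j _ => hnn x y j)).mp hzsum z (Finset.mem_univ z)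
  have hPxz : ∀ x z, Pxz x z = P x (ytrue x) z := by
    intro x z
    show (∑ y : Y, P x y z) = _
    rw [← Finset.sum_erase_add Finset.univ _ (Finset.mem_univ (ytrue x)),
      Finset.sum_eq_zero (fun y hy => hkey x y z (Finset.mem_erase.mp hy).1), zero_add]
  have hPxpos : ∀ x z, 0 < Pxz x z → 0 < Px x := by
    intro x z h
    have : Px x = ∑ z : Z, Pxz x z := Finset.sum_comm
    rw [this]
    refine lt_of_lt_of_le h ?_
    exact Finset.single_le_sum (fun j _ => Finset.sum_nonneg fun i _ => hnn x i j)
      (Finset.mem_univ z)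
  have hPyGx1 : ∀ x z, 0 < Pxz x z → PyGx x (ytrue x) = 1 := by
    intro x z h
    have hx := hPxpos x z h
    exact hdet x hx
  -- reduce sums over y to the ytrue term
  have hreduce : ∀ (g : X → Y → Z → ℝ), (∀ x y z, P x y z = 0 → g x y z = 0) →
      ∀ x, ∑ y : Y, ∑ z : Z, g x y z = ∑ z : Z, g x (ytrue x) z := by
    intro g hg x
    refine Finset.sum_eq_single (ytrue x) ?_ (by simp)
    intro y _ hy
    exact Finset.sum_eq_zero fun z _ => hg x y z (hkey x y z hy)
  have part1 : (∑ x : X, ∑ y : Y, ∑ z : Z,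
      P x y z * Real.log (Q x z y / PyGx x y)) =
      ∑ x : X, ∑ z : Z, Pxz x z * Real.log (Q x z (ytrue x)) := by
    refine Finset.sum_congr rfl fun x _ => ?_
    rw [hreduce (fun x y z => P x y z * Real.log (Q x z y / PyGx x y))
      (fun x y z h => by simp [h]) x]
    refine Finset.sum_congr rfl fun z _ => ?_
    rw [← hPxz x z]
    have hle : 0 ≤ Pxz x z := Finset.sum_nonneg fun i _ => hnn x i z
    rcases eq_or_lt_of_le hle with h | h
    · rw [← h, zero_mul, zero_mul]
    · rw [hPyGx1 x z h, div_one]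
  have hI0 : I = 0 := by
    show (∑ x : X, ∑ y : Y, ∑ z : Z,
      P x y z * Real.log (PyGxz x y z / PyGx x y)) = 0
    refine Finset.sum_eq_zero fun x _ => ?_
    rw [hreduce (fun x y z => P x y z * Real.log (PyGxz x y z / PyGx x y))
      (fun x y z h => by simp [h]) x]
    refine Finset.sum_eq_zero fun z _ => ?_
    have hle : 0 ≤ Pxz x z := Finset.sum_nonneg fun i _ => hnn x i z
    rcases eq_or_lt_of_le hle with h | h
    · rw [← hPxz x z, ← h, zero_mul]
    · have h1 : PyGxz x (ytrue x) z = 1 := by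
        show P x (ytrue x) z / Pxz x z = 1
        rw [← hPxz x z]; exact div_self (ne_of_gt h)
      rw [h1, hPyGx1 x z h, div_one, Real.log_one, mul_zero]
  refine ⟨part1, ?_⟩
  rw [hI0]
  refine Finset.sum_nonpos fun x _ => Finset.sum_nonpos fun z _ => ?_
  refine mul_nonpos_of_nonneg_of_nonpos (Finset.sum_nonneg fun i _ => hnn x i z) ?_
  refine Real.log_nonpos (hQnn x z (ytrue x)) ?_
  calc Q x z (ytrue x) ≤ ∑ y : Y, Q x z y :=
        Finset.single_le_sum (fun y _ => hQnn x z y) (Finset.mem_univ _)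
    _ = 1 := hQsum x z
end

section
/- Let X, Y, Z be nonempty finite types, let P be a joint probability mass function on X × Y × Z with P(x,y,z) > 0 for all (x,y,z), let Q_ρ be a conditional probability mass function on Y given X × Z with Q_ρ(y|x,z) > 0 for all (x,y,z), let Q_φ be a probability mass function on Z with Q_φ(z) > 0 for all z, and let β ≥ 0. Then the conditional information bottleneck objective satisfies the variational lower bound I(Y;Z|X) − β · I(X;Z) ≥ Σ_{x,y,z} P(x,y,z) · log( Q_ρ(y|x,z) / P(y|x) ) − β · Σ_{x,z} P(x,z) · log( P(z|x) / Q_φ(z) ), where I(X;Z) is the mutual information between X and the marginal pair (X,Z) of P. That is, replacing the true answer posterior by a verifier Q_ρ and the true chain marginal by an unconditional prior Q_φ yields a computable lower bound on the CIB objective. -/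
lemma gibbs {ι : Type*} [Fintype ι] (p q : ι → ℝ)
    (hp : ∀ i, 0 < p i) (hq : ∀ i, 0 < q i)
    (h : ∑ i, p i = ∑ i, q i) :
    0 ≤ ∑ i, p i * Real.log (p i / q i) := by
  have key : ∑ i, p i * Real.log (q i / p i) ≤ 0 := by
    calc ∑ i, p i * Real.log (q i / p i)
        ≤ ∑ i, p i * (q i / p i - 1) := by
          apply Finset.sum_le_sum
          intro i _
          exact mul_le_mul_of_nonneg_left
            (Real.log_le_sub_one_of_pos (div_pos (hq i) (hp i))) (hp i).le
      _ = ∑ i, (q i - p i) := by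
          apply Finset.sum_congr rfl
          intro i _
          have := (hp i).ne'
          field_simp
      _ = 0 := by rw [Finset.sum_sub_distrib, h, sub_self]
  have : ∑ i, p i * Real.log (p i / q i) = -∑ i, p i * Real.log (q i / p i) := by
    rw [← Finset.sum_neg_distrib]
    apply Finset.sum_congr rfl
    intro i _
    rw [Real.log_div (hp i).ne' (hq i).ne', Real.log_div (hq i).ne' (hp i).ne']
    ring
  linarith


/-- Variational lower bound on the conditional information bottleneck objective:
for a strictly positive joint pmf `P` on `X × Y × Z`, a strictly positive verifier
`Q_ρ(·|x,z)` on `Y`, a strictly positive unconditional prior `Q_φ` on `Z`, and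
`β ≥ 0`, one has
`I(Y;Z|X) − β·I(X;Z) ≥ Σ P(x,y,z) log(Q_ρ(y|x,z)/P(y|x))
 − β · Σ_{x,z} P(x,z) log(P(z|x)/Q_φ(z))`. -/
theorem cib_variational_lower_bound
    {X Y Z : Type*} [Fintype X] [Fintype Y] [Fintype Z]
    [Nonempty X] [Nonempty Y] [Nonempty Z]
    (P : X → Y → Z → ℝ)
    (hpos : ∀ x y z, 0 < P x y z)
    (hsum : ∑ x : X, ∑ y : Y, ∑ z : Z, P x y z = 1)
    (Qρ : X → Z → Y → ℝ)
    (hQρpos : ∀ x z y, 0 < Qρ x z y)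
    (hQρsum : ∀ x z, ∑ y : Y, Qρ x z y = 1)
    (Qφ : Z → ℝ)
    (hQφpos : ∀ z, 0 < Qφ z)
    (hQφsum : ∑ z : Z, Qφ z = 1)
    (β : ℝ) (hβ : 0 ≤ β) :
    let Px : X → ℝ := fun x => ∑ y : Y, ∑ z : Z, P x y z
    let Pxz : X → Z → ℝ := fun x z => ∑ y : Y, P x y z
    let PZ : Z → ℝ := fun z => ∑ x : X, ∑ y : Y, P x y z
    let PyGx : X → Y → ℝ := fun x y => (∑ z : Z, P x y z) / Px x
    let PyGxz : X → Y → Z → ℝ := fun x y z => P x y z / Pxz x z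
    let PzGx : X → Z → ℝ := fun x z => Pxz x z / Px x
    let Icond : ℝ := ∑ x : X, ∑ y : Y, ∑ z : Z,
      P x y z * Real.log (PyGxz x y z / PyGx x y)
    let Imin : ℝ := ∑ x : X, ∑ z : Z,
      Pxz x z * Real.log (Pxz x z / (Px x * PZ z))
    Icond - β * Imin ≥
      (∑ x : X, ∑ y : Y, ∑ z : Z,
          P x y z * Real.log (Qρ x z y / PyGx x y)) -
        β * ∑ x : X, ∑ z : Z, Pxz x z * Real.log (PzGx x z / Qφ z) := by
  intro Px Pxz PZ PyGx PyGxz PzGx Icond Imin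
  have hPxz : ∀ x z, 0 < Pxz x z := fun x z =>
    Finset.sum_pos (fun y _ => hpos x y z) Finset.univ_nonempty
  have hPx : ∀ x, 0 < Px x := fun x =>
    Finset.sum_pos (fun y _ => Finset.sum_pos (fun z _ => hpos x y z) Finset.univ_nonempty)
      Finset.univ_nonempty
  have hPZ : ∀ z, 0 < PZ z := fun z =>
    Finset.sum_pos (fun x _ => Finset.sum_pos (fun y _ => hpos x y z) Finset.univ_nonempty)
      Finset.univ_nonempty
  have hPyGx : ∀ x y, 0 < PyGx x y := fun x y =>
    div_pos (Finset.sum_pos (fun z _ => hpos x y z) Finset.univ_nonempty) (hPx x)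
  -- D1
  have hD1 : Icond - (∑ x : X, ∑ y : Y, ∑ z : Z,
      P x y z * Real.log (Qρ x z y / PyGx x y)) =
      ∑ x : X, ∑ z : Z, ∑ y : Y, P x y z * Real.log (P x y z / (Pxz x z * Qρ x z y)) := by
    rw [show (∑ x : X, ∑ z : Z, ∑ y : Y, P x y z * Real.log (P x y z / (Pxz x z * Qρ x z y)))
        = ∑ x : X, ∑ y : Y, ∑ z : Z, P x y z * Real.log (P x y z / (Pxz x z * Qρ x z y))
        from Finset.sum_congr rfl fun x _ => Finset.sum_comm]
    simp only [Icond, ← Finset.sum_sub_distrib]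
    apply Finset.sum_congr rfl; intro x _
    apply Finset.sum_congr rfl; intro y _
    apply Finset.sum_congr rfl; intro z _
    rw [← mul_sub]
    congr 1
    rw [Real.log_div (div_pos (hpos x y z) (hPxz x z)).ne' (hPyGx x y).ne',
        Real.log_div (hQρpos x z y).ne' (hPyGx x y).ne',
        Real.log_div ((hpos x y z)).ne' (mul_pos (hPxz x z) (hQρpos x z y)).ne',
        Real.log_div ((hpos x y z)).ne' (hPxz x z).ne',
        Real.log_mul (hPxz x z).ne' (hQρpos x z y).ne']
    ring
  -- D2
  have hD2 : (∑ x : X, ∑ z : Z, Pxz x z * Real.log (PzGx x z / Qφ z)) - Imin =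
      ∑ z : Z, PZ z * Real.log (PZ z / Qφ z) := by
    have step : (∑ x : X, ∑ z : Z, Pxz x z * Real.log (PzGx x z / Qφ z)) - Imin =
        ∑ x : X, ∑ z : Z, Pxz x z * Real.log (PZ z / Qφ z) := by
      simp only [Imin, ← Finset.sum_sub_distrib]
      apply Finset.sum_congr rfl; intro x _
      apply Finset.sum_congr rfl; intro z _
      rw [← mul_sub]
      congr 1
      rw [Real.log_div (div_pos (hPxz x z) (hPx x)).ne' (hQφpos z).ne',
          Real.log_div (hPxz x z).ne' (mul_pos (hPx x) (hPZ z)).ne',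
          Real.log_div (hPZ z).ne' (hQφpos z).ne',
          Real.log_div (hPxz x z).ne' (hPx x).ne',
          Real.log_mul (hPx x).ne' (hPZ z).ne']
      ring
    rw [step, Finset.sum_comm]
    apply Finset.sum_congr rfl; intro z _
    rw [← Finset.sum_mul]
  have hD1pos : 0 ≤ ∑ x : X, ∑ z : Z, ∑ y : Y,
      P x y z * Real.log (P x y z / (Pxz x z * Qρ x z y)) := by
    apply Finset.sum_nonneg; intro x _
    apply Finset.sum_nonneg; intro z _
    apply gibbs (fun y => P x y z) (fun y => Pxz x z * Qρ x z y)
      (fun y => hpos x y z) (fun y => mul_pos (hPxz x z) (hQρpos x z y))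
    rw [← Finset.mul_sum, hQρsum, mul_one]
  have hD2pos : 0 ≤ ∑ z : Z, PZ z * Real.log (PZ z / Qφ z) := by
    apply gibbs PZ Qφ hPZ hQφpos
    rw [hQφsum, ← hsum, Finset.sum_comm]
    exact Finset.sum_congr rfl fun x _ => Finset.sum_comm
  nlinarith [mul_nonneg hβ hD2pos]
end
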